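/- Let Y be a real-valued random variable with all absolute moments finite, fix a nonzero real λ, and let (Y_j)_{j≥1} be mutually independent random variables each having the same distribution as Y, with S_m = Y_1 + Y_2 + ⋯ + Y_m. Then for every integer n≥0 and every positive integer m, E[(S_m)_{n,λ}] = Σ_{k=0}^{n} {n brace k}_{Y,λ} (m)_k = Σ_{k=0}^{n} (−1)^{n−k} ⟨m⟩_{k,λ} S_{1,λ}^Y(n,k), where (m)_k = m(m−1)⋯(m−k+1). -/

import Mathlib

open MeasureTheory Finset

noncomputable section

/-- The degenerate falling factorial `(x)_{n,λ} = x(x-λ)⋯(x-(n-1)λ)`. -/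
def dff (lam x : ℝ) (n : ℕ) : ℝ := ∏ i ∈ Finset.range n, (x - i * lam)

/-- The degenerate rising factorial `⟨x⟩_{n,λ} = x(x+λ)⋯(x+(n-1)λ)`. -/
def drf (lam x : ℝ) (n : ℕ) : ℝ := ∏ i ∈ Finset.range n, (x + i * lam)

/-- The ordinary falling factorial `(x)_n = x(x-1)⋯(x-n+1)`. -/
def ffall (x : ℝ) (n : ℕ) : ℝ := ∏ i ∈ Finset.range n, (x - i)

/-- The ordinary rising factorial `⟨x⟩_n = x(x+1)⋯(x+n-1)`. -/
def frise (x : ℝ) (n : ℕ) : ℝ := ∏ i ∈ Finset.range n, (x + i)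

/-- Composition `f ∘ g` of formal power series, valid when `g` has zero constant term. -/
def pscomp (f g : PowerSeries ℝ) : PowerSeries ℝ :=
  PowerSeries.mk fun n =>
    ∑ k ∈ Finset.range (n + 1), PowerSeries.coeff k f * PowerSeries.coeff n (g ^ k)

/-- The degenerate moment generating series `F_Y = Σ_{n≥0} E[(Y)_{n,λ}] X^n/n!`. -/
def momSeries (lam : ℝ) {Ω : Type*} [MeasurableSpace Ω] (μ : Measure Ω) (Y : Ω → ℝ) :
    PowerSeries ℝ :=
  PowerSeries.mk fun n => (∫ ω, dff lam (Y ω) n ∂μ) / (n.factorial : ℝ)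

/-- Taylor series at `u = 0` of the degenerate logarithm `log_λ(1+u)`:
`Σ_{n≥1} λ^{n-1} (1)_{n,1/λ} u^n/n!`. -/
def degLogSeries (lam : ℝ) : PowerSeries ℝ :=
  PowerSeries.mk fun n => if n = 0 then 0 else lam ^ (n - 1) * dff (1 / lam) 1 n / (n.factorial : ℝ)

/-- `G_Y`, the degenerate cumulant generating series `log_{-λ}(F_Y)`, i.e. the substitution of
`F_Y - 1` into the Taylor series of `log_{-λ}(1+u)`. -/
def cumSeries (lam : ℝ) {Ω : Type*} [MeasurableSpace Ω] (μ : Measure Ω) (Y : Ω → ℝ) :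
    PowerSeries ℝ :=
  pscomp (degLogSeries (-lam)) (momSeries lam μ Y - 1)

/-- The degenerate cumulants `κ_{n,λ}(Y) := n!·(coefficient of X^n in G_Y)`. -/
def degCumulant (lam : ℝ) {Ω : Type*} [MeasurableSpace Ω] (μ : Measure Ω) (Y : Ω → ℝ)
    (n : ℕ) : ℝ :=
  (n.factorial : ℝ) * PowerSeries.coeff n (cumSeries lam μ Y)

/-- The probabilistic degenerate Stirling numbers of the second kind
`{n brace k}_{Y,λ} := n!·(coefficient of X^n in (F_Y - 1)^k/k!)`. -/
def braceY (lam : ℝ) {Ω : Type*} [MeasurableSpace Ω] (μ : Measure Ω) (Y : Ω → ℝ)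
    (n k : ℕ) : ℝ :=
  (n.factorial : ℝ) * PowerSeries.coeff n ((momSeries lam μ Y - 1) ^ k) / (k.factorial : ℝ)

/-- The probabilistic degenerate Stirling numbers of the first kind, defined by
`(-1)^{n-k} S_{1,λ}^Y(n,k) := n!·(coefficient of X^n in G_Y^k/k!)`. -/
def S1Y (lam : ℝ) {Ω : Type*} [MeasurableSpace Ω] (μ : Measure Ω) (Y : Ω → ℝ)
    (n k : ℕ) : ℝ :=
  (-1 : ℝ) ^ (n - k) * ((n.factorial : ℝ) * PowerSeries.coeff n ((cumSeries lam μ Y) ^ k) / (k.factorial : ℝ))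

/-- Taylor series of `log(1+u)`: `Σ_{n≥1} (-1)^{n-1} u^n/n`. -/
def logSeries : PowerSeries ℝ :=
  PowerSeries.mk fun n => if n = 0 then 0 else (-1 : ℝ) ^ (n - 1) / n

/-- `F^x := exp (x · Log F)` for a power series `F` with constant term `1`. -/
def psPow (F : PowerSeries ℝ) (x : ℝ) : PowerSeries ℝ :=
  pscomp (PowerSeries.exp ℝ) (PowerSeries.C x * pscomp logSeries (F - 1))

/-- `F ↦ F/X`, i.e. the shift sending `Σ a_{n+1} X^{n+1}` (with `a_0 = 0`) to `Σ a_{n+1} X^n`. -/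
def shiftDown (F : PowerSeries ℝ) : PowerSeries ℝ :=
  PowerSeries.mk fun n => PowerSeries.coeff (n + 1) F

/-- The probabilistic degenerate Bernoulli polynomials associated with `Y`:
`Σ_{n≥0} β_{n,λ}^Y(x) X^n/n! = (X/(F_Y-1))·F_Y^x`. -/
def probBernoulli (lam : ℝ) {Ω : Type*} [MeasurableSpace Ω] (μ : Measure Ω) (Y : Ω → ℝ)
    (n : ℕ) (x : ℝ) : ℝ :=
  (n.factorial : ℝ) *
    PowerSeries.coeff n ((shiftDown (momSeries lam μ Y - 1))⁻¹ * psPow (momSeries lam μ Y) x)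

/-- The probabilistic degenerate Euler polynomials associated with `Y`:
`Σ_{n≥0} 𝓔_{n,λ}^Y(x) X^n/n! = (2/(F_Y+1))·F_Y^x`. -/
def probEuler (lam : ℝ) {Ω : Type*} [MeasurableSpace Ω] (μ : Measure Ω) (Y : Ω → ℝ)
    (n : ℕ) (x : ℝ) : ℝ :=
  (n.factorial : ℝ) *
    PowerSeries.coeff n
      (PowerSeries.C 2 * (momSeries lam μ Y + 1)⁻¹ * psPow (momSeries lam μ Y) x)

/-!
The generating series `Σ (x)_{n,λ} Xⁿ/n!` is `(1 + λX)^{x/λ}`, so it is multiplicative in `x`;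
taking expectations, `F_{S+T} = F_S F_T` for independent `S`, `T`, and `E[(S_m)_{n,λ}]` is
`n!` times the coefficient of `Xⁿ` in `F_Y^m`.

Expanding `F_Y^m = (1 + (F_Y - 1))^m` gives the first formula. For the second,
`-λ G_Y = F_Y^{-λ} - 1`, hence `F_Y^m = (1 - λ G_Y)^{-m/λ}` by `((1 + u)^a)^b = (1 + u)^{ab}`
for formal binomial series; the coefficients of both sides of that identity are polynomials in `b`
which agree at the natural numbers.
-/

open PowerSeries ProbabilityTheory
open scoped Nat

lemma ffall_eq_eval_descPochhammer (x : ℝ) (n : ℕ) :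
    ffall x n = (descPochhammer ℝ n).eval x := by
  induction n with
  | zero => simp [ffall]
  | succ n ih => simp [ffall, prod_range_succ, descPochhammer_succ_right, ← ih]

lemma dff_eq_pow_mul_ffall {lam : ℝ} (hlam : lam ≠ 0) (x : ℝ) (n : ℕ) :
    dff lam x n = lam ^ n * ffall (x / lam) n := by
  rw [dff, ffall, show lam ^ n = ∏ _i ∈ range n, lam by simp, ← prod_mul_distrib]
  exact prod_congr rfl fun i _ => by field_simp

lemma drf_eq_dff_neg (lam x : ℝ) (n : ℕ) : drf lam x n = dff (-lam) x n := by
  simp [drf, dff]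

lemma coeff_binomialSeries_eq_ffall_div (r : ℝ) (n : ℕ) :
    coeff n (PowerSeries.binomialSeries ℝ r) = ffall r n / n ! := by
  rw [binomialSeries_coeff, Ring.choose_eq_smul, ← Polynomial.aeval_eq_smeval,
    Polynomial.aeval_def, Polynomial.eval₂_eq_eval_map, descPochhammer_map,
    ffall_eq_eval_descPochhammer]
  simp [div_eq_inv_mul]

lemma binomialSeries_natCast_mul (p : ℕ) (r : ℝ) :
    PowerSeries.binomialSeries ℝ (p * r) = PowerSeries.binomialSeries ℝ r ^ p := by
  induction p with
  | zero => simp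
  | succ p ih => rw [Nat.cast_succ, add_one_mul, binomialSeries_add, ih, pow_succ]

def degExpSeries (lam x : ℝ) : ℝ⟦X⟧ := PowerSeries.mk fun n => dff lam x n / n !

lemma degExpSeries_eq_rescale {lam : ℝ} (hlam : lam ≠ 0) (x : ℝ) :
    degExpSeries lam x = rescale lam (PowerSeries.binomialSeries ℝ (x / lam)) := by
  ext n
  rw [degExpSeries, coeff_mk, coeff_rescale, coeff_binomialSeries_eq_ffall_div,
    dff_eq_pow_mul_ffall hlam]
  ring

lemma degExpSeries_zero {lam : ℝ} (hlam : lam ≠ 0) : degExpSeries lam 0 = 1 := by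
  rw [degExpSeries_eq_rescale hlam, zero_div, binomialSeries_zero, map_one]

lemma degExpSeries_add {lam : ℝ} (hlam : lam ≠ 0) (x y : ℝ) :
    degExpSeries lam (x + y) = degExpSeries lam x * degExpSeries lam y := by
  simp only [degExpSeries_eq_rescale hlam, add_div, binomialSeries_add, map_mul]

lemma coeff_pow_eq_zero_of_lt {R : Type*} [Semiring R] {g : R⟦X⟧} (hg : constantCoeff g = 0)
    {n k : ℕ} (h : n < k) : coeff n (g ^ k) = 0 :=
  coeff_of_lt_order _ ((Nat.cast_lt.mpr h).trans_le (le_order_pow_of_constantCoeff_eq_zero k hg))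

lemma pscomp_eq_subst (f : ℝ⟦X⟧) {g : ℝ⟦X⟧} (hg : constantCoeff g = 0) :
    pscomp f g = f.subst g := by
  ext n
  rw [pscomp, coeff_mk, coeff_subst' (HasSubst.of_constantCoeff_zero' hg),
    finsum_eq_sum_of_support_subset (s := range (n + 1))]
  · simp [smul_eq_mul]
  · intro k hk
    by_contra h
    simp only [coe_range, Set.mem_Iio, not_lt] at h
    exact hk (by simp [coeff_pow_eq_zero_of_lt hg (by omega : n < k)])

lemma subst_binomialSeries_natCast {g : ℝ⟦X⟧} (hg : constantCoeff g = 0) (p : ℕ) :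
    (PowerSeries.binomialSeries ℝ (p : ℝ)).subst g = (1 + g) ^ p := by
  rw [binomialSeries_nat, ← coe_substAlgHom (HasSubst.of_constantCoeff_zero' hg), map_pow,
    map_add, map_one, substAlgHom_X]

lemma subst_binomialSeries_sub_one_binomialSeries (c r : ℝ) :
    (PowerSeries.binomialSeries ℝ r).subst (PowerSeries.binomialSeries ℝ c - 1) =
      PowerSeries.binomialSeries ℝ (c * r) := by
  set g := PowerSeries.binomialSeries ℝ c - 1
  have hg : constantCoeff g = 0 := by simp [g]
  ext j
  let P : Polynomial ℝ :=
    ∑ k ∈ range (j + 1), Polynomial.C (coeff j (g ^ k) / k !) * descPochhammer ℝ k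
  let Q : Polynomial ℝ :=
    Polynomial.C ((j ! : ℝ)⁻¹) * (descPochhammer ℝ j).comp (Polynomial.C c * Polynomial.X)
  have hP (s : ℝ) : P.eval s = coeff j ((PowerSeries.binomialSeries ℝ s).subst g) := by
    rw [← pscomp_eq_subst _ hg, pscomp, coeff_mk, Polynomial.eval_finsetSum]
    refine sum_congr rfl fun k _ => ?_
    rw [coeff_binomialSeries_eq_ffall_div, ffall_eq_eval_descPochhammer, Polynomial.eval_mul,
      Polynomial.eval_C]
    ring
  have hQ (s : ℝ) : Q.eval s = coeff j (PowerSeries.binomialSeries ℝ (c * s)) := by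
    rw [coeff_binomialSeries_eq_ffall_div, ffall_eq_eval_descPochhammer]
    simp [Q, div_eq_inv_mul]
  have hPQ : P = Q := Polynomial.eq_of_infinite_eval_eq P Q <|
    (Set.infinite_range_of_injective Nat.cast_injective).mono <| by
      rintro _ ⟨p, rfl⟩
      simp only [Set.mem_ofPred_eq, hP, hQ, subst_binomialSeries_natCast hg, mul_comm c,
        binomialSeries_natCast_mul, g, add_sub_cancel]
  rw [← hP, hPQ, hQ]

lemma degLogSeries_neg_eq_smul {lam : ℝ} (hlam : lam ≠ 0) :
    degLogSeries (-lam) = (-lam⁻¹) • (PowerSeries.binomialSeries ℝ (-lam) - 1) := by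
  ext n
  rcases n with _ | n
  · simp [degLogSeries]
  · have hlam' : 1 / -lam ≠ 0 := by simpa using hlam
    rw [degLogSeries, coeff_mk, if_neg n.succ_ne_zero, coeff_smul, map_sub,
      coeff_binomialSeries_eq_ffall_div, coeff_one, if_neg n.succ_ne_zero, sub_zero,
      dff_eq_pow_mul_ffall hlam', one_div_one_div, Nat.add_sub_cancel, smul_eq_mul]
    have h : (-lam) ^ n * (1 / -lam) ^ (n + 1) = -lam⁻¹ := by
      rw [pow_succ, ← mul_assoc, ← mul_pow, mul_one_div_cancel (neg_ne_zero.mpr hlam), one_pow,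
        one_mul, one_div, inv_neg]
    rw [← h]
    ring

section PowersOfSeries

variable {F : ℝ⟦X⟧} (hF : constantCoeff F = 1)
include hF

lemma pow_eq_subst_binomialSeries (m : ℕ) :
    F ^ m = (PowerSeries.binomialSeries ℝ (m : ℝ)).subst (F - 1) := by
  rw [subst_binomialSeries_natCast (by simp [hF]), add_sub_cancel]

lemma coeff_pow_eq_sum_ffall (m n : ℕ) :
    coeff n (F ^ m) = ∑ k ∈ range (n + 1), ffall m k / k ! * coeff n ((F - 1) ^ k) := by
  rw [pow_eq_subst_binomialSeries hF, ← pscomp_eq_subst _ (by simp [hF])]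
  simp only [pscomp, coeff_mk, coeff_binomialSeries_eq_ffall_div]

lemma smul_pscomp_degLogSeries_eq_subst {lam : ℝ} (hlam : lam ≠ 0) :
    (-lam) • pscomp (degLogSeries (-lam)) (F - 1) =
      (PowerSeries.binomialSeries ℝ (-lam) - 1).subst (F - 1) := by
  have hF1 : constantCoeff (F - 1) = 0 := by simp [hF]
  rw [pscomp_eq_subst _ hF1, degLogSeries_neg_eq_smul hlam,
    subst_smul (HasSubst.of_constantCoeff_zero' hF1), smul_smul, neg_mul_neg,
    mul_inv_cancel₀ hlam, one_smul]

lemma pow_eq_subst_smul_pscomp_degLogSeries {lam : ℝ} (hlam : lam ≠ 0) (m : ℕ) :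
    F ^ m = (PowerSeries.binomialSeries ℝ (m / -lam)).subst
      ((-lam) • pscomp (degLogSeries (-lam)) (F - 1)) := by
  have hF1 : constantCoeff (F - 1) = 0 := by simp [hF]
  have hb : constantCoeff (PowerSeries.binomialSeries ℝ (-lam) - 1) = 0 := by simp
  rw [smul_pscomp_degLogSeries_eq_subst hF hlam, ← subst_comp_subst_apply
    (HasSubst.of_constantCoeff_zero' hb) (HasSubst.of_constantCoeff_zero' hF1),
    subst_binomialSeries_sub_one_binomialSeries, mul_div_cancel₀ _ (neg_ne_zero.mpr hlam),
    pow_eq_subst_binomialSeries hF]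

lemma coeff_pow_eq_sum_drf {lam : ℝ} (hlam : lam ≠ 0) (m n : ℕ) :
    coeff n (F ^ m) = ∑ k ∈ range (n + 1),
      drf lam m k / k ! * coeff n (pscomp (degLogSeries (-lam)) (F - 1) ^ k) := by
  have hG : constantCoeff ((-lam) • pscomp (degLogSeries (-lam)) (F - 1)) = 0 := by
    have hF1 : constantCoeff (F - 1) = 0 := by simp [hF]
    rw [smul_pscomp_degLogSeries_eq_subst hF hlam]
    exact constantCoeff_subst_eq_zero hF1 _ (by simp)
  rw [pow_eq_subst_smul_pscomp_degLogSeries hF hlam, ← pscomp_eq_subst _ hG]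
  simp only [pscomp, coeff_mk, coeff_binomialSeries_eq_ffall_div, smul_pow, coeff_smul,
    drf_eq_dff_neg, dff_eq_pow_mul_ffall (neg_ne_zero.mpr hlam), smul_eq_mul]
  exact sum_congr rfl fun k _ => by ring

end PowersOfSeries

section Moments

variable {Ω : Type*} [MeasurableSpace Ω] {μ : Measure Ω}

lemma integral_dff_eq_factorial_mul_coeff_momSeries (lam : ℝ) (X : Ω → ℝ) (n : ℕ) :
    ∫ ω, dff lam (X ω) n ∂μ = n ! * coeff n (momSeries lam μ X) := by
  rw [momSeries, coeff_mk, mul_div_cancel₀ _ (by positivity)]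

lemma coeff_momSeries (lam : ℝ) (X : Ω → ℝ) (n : ℕ) :
    coeff n (momSeries lam μ X) = ∫ ω, coeff n (degExpSeries lam (X ω)) ∂μ := by
  simp only [momSeries, degExpSeries, coeff_mk, integral_div]

lemma measurable_coeff_degExpSeries (lam : ℝ) (n : ℕ) :
    Measurable fun x => coeff n (degExpSeries lam x) := by
  simp only [degExpSeries, coeff_mk, dff]
  fun_prop

lemma memLp_of_integrable_abs_pow {X : Ω → ℝ} (hX : AEStronglyMeasurable X μ)
    (h : ∀ n : ℕ, Integrable (fun ω => |X ω| ^ n) μ) (p : ℕ) : MemLp X p μ := by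
  rcases eq_or_ne p 0 with rfl | hp
  · simpa using memLp_zero_iff_aestronglyMeasurable.mpr hX
  · refine (integrable_norm_rpow_iff hX (by simpa using hp) (by simp)).mp ?_
    simpa [Real.rpow_natCast] using h p

lemma integrable_coeff_degExpSeries [IsFiniteMeasure μ] {X : Ω → ℝ}
    (hX : ∀ p : ℕ, MemLp X p μ) (lam : ℝ) (n : ℕ) :
    Integrable (fun ω => coeff n (degExpSeries lam (X ω))) μ := by
  let P : Polynomial ℝ := ∏ i ∈ range n, (Polynomial.X - Polynomial.C (i * lam))
  have hP (x : ℝ) : coeff n (degExpSeries lam x) = P.eval x / n ! := by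
    simp [degExpSeries, dff, P, Polynomial.eval_prod]
  simp_rw [hP, Polynomial.eval_eq_sum_range]
  refine (integrable_finsetSum _ fun i _ => ?_).div_const _
  have hpow : Integrable (fun ω => ‖X ω‖ ^ i) μ := (hX i).integrable_norm_pow'
  simp_rw [← norm_pow] at hpow
  exact ((integrable_norm_iff ((hX i).aestronglyMeasurable.pow i)).mp hpow).const_mul _

lemma momSeries_zero [IsProbabilityMeasure μ] {lam : ℝ} (hlam : lam ≠ 0) :
    momSeries lam μ 0 = 1 := by
  ext n
  simp [coeff_momSeries, degExpSeries_zero hlam]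

lemma ProbabilityTheory.IndepFun.momSeries_add [IsFiniteMeasure μ] {lam : ℝ} (hlam : lam ≠ 0)
    {X Z : Ω → ℝ} (hXZ : IndepFun X Z μ) (hX : ∀ p : ℕ, MemLp X p μ)
    (hZ : ∀ p : ℕ, MemLp Z p μ) :
    momSeries lam μ (X + Z) = momSeries lam μ X * momSeries lam μ Z := by
  ext n
  have hint (i j : ℕ) : Integrable (fun ω =>
      coeff i (degExpSeries lam (X ω)) * coeff j (degExpSeries lam (Z ω))) μ :=
    (hXZ.comp (measurable_coeff_degExpSeries lam i)
      (measurable_coeff_degExpSeries lam j)).integrable_mul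
      (integrable_coeff_degExpSeries hX lam i) (integrable_coeff_degExpSeries hZ lam j)
  have hmul (i j : ℕ) :
      ∫ ω, coeff i (degExpSeries lam (X ω)) * coeff j (degExpSeries lam (Z ω)) ∂μ =
        (∫ ω, coeff i (degExpSeries lam (X ω)) ∂μ) * ∫ ω, coeff j (degExpSeries lam (Z ω)) ∂μ :=
    hXZ.integral_fun_comp_mul_comp (hX 0).aestronglyMeasurable.aemeasurable
      (hZ 0).aestronglyMeasurable.aemeasurable
      (measurable_coeff_degExpSeries lam i).aestronglyMeasurable
      (measurable_coeff_degExpSeries lam j).aestronglyMeasurable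
  simp only [coeff_momSeries, Pi.add_apply, degExpSeries_add hlam, coeff_mul]
  rw [integral_finsetSum _ fun p _ => hint p.1 p.2]
  exact sum_congr rfl fun p _ => hmul p.1 p.2

lemma ProbabilityTheory.IdentDistrib.momSeries_eq {Ω' : Type*} [MeasurableSpace Ω']
    {ν : Measure Ω'} {X : Ω → ℝ} {Y : Ω' → ℝ} (h : IdentDistrib X Y μ ν) (lam : ℝ) :
    momSeries lam μ X = momSeries lam ν Y := by
  ext n
  simpa [coeff_momSeries] using (h.comp (measurable_coeff_degExpSeries lam n)).integral_eq

lemma ProbabilityTheory.iIndepFun.momSeries_sum_range [IsProbabilityMeasure μ] {lam : ℝ}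
    (hlam : lam ≠ 0) {Ys : ℕ → Ω → ℝ} {Y : Ω → ℝ} (hind : iIndepFun Ys μ)
    (hid : ∀ j, IdentDistrib (Ys j) Y μ μ) (hY : ∀ p : ℕ, MemLp Y p μ) (m : ℕ) :
    momSeries lam μ (∑ j ∈ range m, Ys j) = momSeries lam μ Y ^ m := by
  have hYs (j p : ℕ) : MemLp (Ys j) p μ := (hid j).memLp_iff.mpr (hY p)
  induction m with
  | zero => simpa using momSeries_zero hlam
  | succ m ih =>
    have hindep := hind.indepFun_finsetSum_of_notMem₀ (fun j => (hid j).aemeasurable_fst)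
      (notMem_range_self (n := m))
    rw [sum_range_succ, hindep.momSeries_add hlam
      (fun p => memLp_finsetSum' _ fun j _ => hYs j p) (hYs m), ih, (hid m).momSeries_eq, pow_succ]

end Moments

theorem moment_sum_iid_eq_sum_braceY_eq_sum_S1Y_general {Ω : Type*} [MeasurableSpace Ω] (μ : MeasureTheory.Measure Ω)
    [MeasureTheory.IsProbabilityMeasure μ] (Y : Ω → ℝ) (hY : Measurable Y)
    (hmom : ∀ n : ℕ, MeasureTheory.Integrable (fun ω => |Y ω| ^ n) μ)
    (lam : ℝ) (hlam : lam ≠ 0)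
    (Ys : ℕ → Ω → ℝ)
    (hind : ProbabilityTheory.iIndepFun Ys μ)
    (hid : ∀ j : ℕ, ProbabilityTheory.IdentDistrib (Ys j) Y μ μ)
    (n m : ℕ) :
    (∫ ω, dff lam (∑ j ∈ Finset.range m, Ys j ω) n ∂μ) =
        ∑ k ∈ Finset.range (n + 1), braceY lam μ Y n k * ffall (m : ℝ) k ∧
      (∫ ω, dff lam (∑ j ∈ Finset.range m, Ys j ω) n ∂μ) =
        ∑ k ∈ Finset.range (n + 1), (-1 : ℝ) ^ (n - k) * drf lam (m : ℝ) k * S1Y lam μ Y n k := by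
  have hF : constantCoeff (momSeries lam μ Y) = 1 := by
    simp [← coeff_zero_eq_constantCoeff_apply, momSeries, dff]
  have hmoment : ∫ ω, dff lam (∑ j ∈ range m, Ys j ω) n ∂μ
      = n ! * coeff n (momSeries lam μ Y ^ m) := by
    rw [← hind.momSeries_sum_range hlam hid
      (memLp_of_integrable_abs_pow hY.aestronglyMeasurable hmom) m,
      ← integral_dff_eq_factorial_mul_coeff_momSeries]
    simp only [Finset.sum_apply]
  refine ⟨?_, ?_⟩
  · rw [hmoment, coeff_pow_eq_sum_ffall hF, mul_sum]
    exact sum_congr rfl fun k _ => by rw [braceY]; ring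
  · rw [hmoment, coeff_pow_eq_sum_drf hF hlam, mul_sum]
    refine sum_congr rfl fun k _ => ?_
    have hsq : (-1 : ℝ) ^ (n - k) * (-1) ^ (n - k) = 1 := by rw [← mul_pow]; norm_num
    rw [S1Y, cumSeries]
    linear_combination (-(drf lam m k * (n ! *
      coeff n (pscomp (degLogSeries (-lam)) (momSeries lam μ Y - 1) ^ k) / k !))) * hsq

theorem moment_sum_iid_eq_sum_braceY_eq_sum_S1Y {Ω : Type*} [MeasurableSpace Ω] (μ : MeasureTheory.Measure Ω)
    [MeasureTheory.IsProbabilityMeasure μ] (Y : Ω → ℝ) (hY : Measurable Y)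
    (hmom : ∀ n : ℕ, MeasureTheory.Integrable (fun ω => |Y ω| ^ n) μ)
    (lam : ℝ) (hlam : lam ≠ 0)
    (Ys : ℕ → Ω → ℝ)
    (hind : ProbabilityTheory.iIndepFun Ys μ)
    (hid : ∀ j : ℕ, ProbabilityTheory.IdentDistrib (Ys j) Y μ μ)
    (n m : ℕ) (hm : 1 ≤ m) :
    (∫ ω, dff lam (∑ j ∈ Finset.range m, Ys j ω) n ∂μ) =
        ∑ k ∈ Finset.range (n + 1), braceY lam μ Y n k * ffall (m : ℝ) k ∧
      (∫ ω, dff lam (∑ j ∈ Finset.range m, Ys j ω) n ∂μ) =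
        ∑ k ∈ Finset.range (n + 1), (-1 : ℝ) ^ (n - k) * drf lam (m : ℝ) k * S1Y lam μ Y n k :=
  moment_sum_iid_eq_sum_braceY_eq_sum_S1Y_general μ Y hY hmom lam hlam Ys hind hid n m

end
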